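/- Two-step stabilization additivity of sink counts: fix instruction stacks and particle locations; let S₁ be the number of particles absorbed at the sinks after stabilizing the first m₁ particles on {1,...,n}, and S' the number of additional particles absorbed after adding m₂ further particles (waking any sleepers they meet) and restabilizing. Then S₁ + S' equals the number S of particles absorbed when all m₁ + m₂ particles are placed at once and the system is stabilized. -/

import Mathlib

/-- An activated random walk instruction. -/
inductive ArwInstr
  | left
  | right
  | sleep
deriving DecidableEq

/-- A state of activated random walk: the number of active particles at each site,
and whether the site holds a (single) sleeping particle. -/
structure ArwState where
  active : ℤ → ℕ
  asleep : ℤ → Bool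

/-- One active particle arrives at site `w`, waking a sleeping particle if present. -/
def arrive (st : ArwState) (w : ℤ) : ArwState where
  active := Function.update st.active w (st.active w + (if st.asleep w then 2 else 1))
  asleep := Function.update st.asleep w false

/-- Topple site `v`: execute its next unused instruction (`u v` instructions have been
used so far, the stacks being indexed from `1`). A `sleep` instruction puts a lone
active particle to sleep and is otherwise a no-op. -/
def topple (I : ℤ → ℕ → ArwInstr) (u : ℤ → ℕ) (st : ArwState) (v : ℤ) : ArwState :=
  match I v (u v + 1) with
  | .left  => arrive { st with active := Function.update st.active v (st.active v - 1) } (v - 1)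
  | .right => arrive { st with active := Function.update st.active v (st.active v - 1) } (v + 1)
  | .sleep =>
      if st.active v = 1 ∧ st.asleep v = false then
        { active := Function.update st.active v 0,
          asleep := Function.update st.asleep v true }
      else st

/-- Run a sequence of topplings, tracking the odometer `u` and the state. -/
def runArw (I : ℤ → ℕ → ArwInstr) : List ℤ → (ℤ → ℕ) × ArwState → (ℤ → ℕ) × ArwState
  | [], p => p
  | v :: rest, (u, st) =>
      runArw I rest (Function.update u v (u v + 1), topple I u st v)

/-- A toppling sequence is legal if each toppled site holds an active particle
at the time it is toppled. -/
def LegalSeq (I : ℤ → ℕ → ArwInstr) : List ℤ → (ℤ → ℕ) → ArwState → Prop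
  | [], _, _ => True
  | v :: rest, u, st =>
      1 ≤ st.active v ∧ LegalSeq I rest (Function.update u v (u v + 1)) (topple I u st v)

/-- The initial state of the configuration `σ`, with no sleeping particles. -/
def initState (σ : ℤ → ℕ) : ArwState := ⟨σ, fun _ => false⟩

/-- A toppling sequence stabilizes `V` if it only topples sites of `V`, is legal from
the initial configuration `σ` (with no sleeping particles), and afterwards no site of
`V` holds an active particle. -/
def Stabilizes (I : ℤ → ℕ → ArwInstr) (σ : ℤ → ℕ) (V : Set ℤ) (seq : List ℤ) : Prop :=
  (∀ v ∈ seq, v ∈ V) ∧ LegalSeq I seq 0 (initState σ) ∧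
    ∀ v ∈ V, (runArw I seq (0, initState σ)).2.active v = 0


/-- Add `τ v` new active particles at each site `v`, waking any sleeping particle at a
site that receives at least one new particle. -/
def addParticles (st : ArwState) (τ : ℤ → ℕ) : ArwState where
  active := fun v =>
    st.active v + τ v + (if st.asleep v = true ∧ 1 ≤ τ v then 1 else 0)
  asleep := fun v => st.asleep v && (τ v == 0)

/-- The number of particles absorbed at the sinks `0` and `n+1` in a state. -/
def sinkCount (n : ℕ) (st : ArwState) : ℕ :=
  st.active 0 + st.active ((n : ℤ) + 1)

/-!
Adding particles to a state commutes with toppling an active site: the only instruction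
whose effect depends on the particle count is `sleep`, and a particle that falls asleep
before new particles reach its site is woken by them. Hence `seqA ++ seqB` is legal from
`σ₁ + σ₂` and ends in the two-stage final state, so it stabilizes `{1,…,n}`. By the abelian
property (toppling two distinct active sites commutes, so the first site toppled by one
stabilizing sequence can be moved to the front of any other), all legal sequences
stabilizing the same set from the same start end in the same odometer and state; apply this
to `seqC` and `seqA ++ seqB`.
-/

attribute [ext] ArwState

namespace ArwState

def move (v t : ℤ) (st : ArwState) : ArwState :=
  arrive ⟨Function.update st.active v (st.active v - 1), st.asleep⟩ t

def trySleep (v : ℤ) (st : ArwState) : ArwState :=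
  if st.active v = 1 ∧ st.asleep v = false then
    ⟨Function.update st.active v 0, Function.update st.asleep v true⟩
  else st

theorem move_active (v t x : ℤ) (st : ArwState) :
    (st.move v t).active x = st.active x - (if x = v then 1 else 0) +
      (if x = t then (if st.asleep t then 2 else 1) else 0) := by
  simp only [move, arrive, Function.update_apply]
  split_ifs <;> grind

theorem move_asleep (v t : ℤ) (st : ArwState) :
    (st.move v t).asleep = Function.update st.asleep t false := rfl

variable {v w : ℤ} {st : ArwState}

theorem move_comm (t t' : ℤ) (hvw : v ≠ w) (hv : 1 ≤ st.active v) (hw : 1 ≤ st.active w) :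
    (st.move v t).move w t' = (st.move w t').move v t := by
  ext x
  · simp only [move_active, move_asleep, Function.update_apply]
    split_ifs <;> grind
  · simp only [move_asleep, Function.update_apply]
    split_ifs <;> rfl

theorem trySleep_move_comm (t : ℤ) (hvw : v ≠ w) (hw : 1 ≤ st.active w) :
    (st.move v t).trySleep w = (st.trySleep w).move v t := by
  unfold trySleep
  split_ifs <;> ext x <;> simp only [move_active, move_asleep, Function.update_apply] at * <;>
    split_ifs at * <;> grind

theorem trySleep_comm (hvw : v ≠ w) :
    (st.trySleep v).trySleep w = (st.trySleep w).trySleep v := by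
  unfold trySleep
  split_ifs <;> ext x <;> simp only [Function.update_apply] at * <;> split_ifs at * <;> grind

end ArwState

def ArwInstr.act : ArwInstr → ℤ → ArwState → ArwState
  | .left, v => ArwState.move v (v - 1)
  | .right, v => ArwState.move v (v + 1)
  | .sleep, v => ArwState.trySleep v

theorem ArwInstr.act_comm (a b : ArwInstr) {v w : ℤ} (hvw : v ≠ w) {st : ArwState}
    (hv : 1 ≤ st.active v) (hw : 1 ≤ st.active w) :
    b.act w (a.act v st) = a.act v (b.act w st) := by
  cases a <;> cases b <;> simp only [act]
  all_goals first
    | exact ArwState.move_comm _ _ hvw hv hw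
    | exact ArwState.trySleep_move_comm _ hvw hw
    | exact (ArwState.trySleep_move_comm _ hvw.symm hv).symm
    | exact ArwState.trySleep_comm hvw

theorem ArwInstr.active_le_act (a : ArwInstr) {v w : ℤ} (hvw : v ≠ w) (st : ArwState) :
    st.active v ≤ (a.act w st).active v := by
  cases a <;> simp only [act, ArwState.trySleep]
  · rw [ArwState.move_active]; grind
  · rw [ArwState.move_active]; grind
  · split_ifs <;> simp [Function.update_of_ne hvw]

section Toppling

variable (I : ℤ → ℕ → ArwInstr)

theorem topple_eq_act (u : ℤ → ℕ) (st : ArwState) (v : ℤ) :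
    topple I u st v = (I v (u v + 1)).act v st := by
  unfold topple
  split <;> simp only [ArwInstr.act, *] <;> rfl

theorem topple_comm (u : ℤ → ℕ) {v w : ℤ} (hvw : v ≠ w) {st : ArwState}
    (hv : 1 ≤ st.active v) (hw : 1 ≤ st.active w) :
    topple I (Function.update u v (u v + 1)) (topple I u st v) w =
      topple I (Function.update u w (u w + 1)) (topple I u st w) v := by
  simp only [topple_eq_act, Function.update_of_ne hvw, Function.update_of_ne hvw.symm]
  exact ArwInstr.act_comm _ _ hvw hv hw

theorem active_le_topple (u : ℤ → ℕ) {v w : ℤ} (hvw : v ≠ w) (st : ArwState) :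
    st.active v ≤ (topple I u st w).active v := by
  rw [topple_eq_act]
  exact ArwInstr.active_le_act _ hvw st

end Toppling

section Runs

variable (I : ℤ → ℕ → ArwInstr)

theorem runArw_append (a b : List ℤ) (p : (ℤ → ℕ) × ArwState) :
    runArw I (a ++ b) p = runArw I b (runArw I a p) := by
  induction a generalizing p with
  | nil => rfl
  | cons v a ih => exact ih _

theorem legalSeq_append (a b : List ℤ) (u : ℤ → ℕ) (st : ArwState) :
    LegalSeq I (a ++ b) u st ↔
      LegalSeq I a u st ∧ LegalSeq I b (runArw I a (u, st)).1 (runArw I a (u, st)).2 := by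
  induction a generalizing u st with
  | nil => simp [LegalSeq, runArw]
  | cons v a ih => simp only [List.cons_append, LegalSeq, runArw, ih, and_assoc]

theorem active_le_runArw {v : ℤ} {seq : List ℤ} (hv : v ∉ seq) (u : ℤ → ℕ) (st : ArwState) :
    st.active v ≤ (runArw I seq (u, st)).2.active v := by
  induction seq generalizing u st with
  | nil => exact le_rfl
  | cons w seq ih =>
    rw [List.mem_cons, not_or] at hv
    exact (active_le_topple I u hv.1 st).trans (ih hv.2 _ _)

theorem runArw_pair_comm (u : ℤ → ℕ) {v w : ℤ} (hvw : v ≠ w) {st : ArwState}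
    (hv : 1 ≤ st.active v) (hw : 1 ≤ st.active w) :
    runArw I [w, v] (u, st) = runArw I [v, w] (u, st) := by
  simp only [runArw, Function.update_of_ne hvw, Function.update_of_ne hvw.symm,
    Function.update_comm hvw, topple_comm I u hvw hv hw]

theorem LegalSeq.move_front {v : ℤ} {β₁ : List ℤ} (hβ₁ : v ∉ β₁) (β₂ : List ℤ)
    {u : ℤ → ℕ} {st : ArwState} (hv : 1 ≤ st.active v)
    (h : LegalSeq I (β₁ ++ v :: β₂) u st) :
    LegalSeq I (v :: (β₁ ++ β₂)) u st ∧
      runArw I (v :: (β₁ ++ β₂)) (u, st) = runArw I (β₁ ++ v :: β₂) (u, st) := by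
  induction β₁ generalizing u st with
  | nil => exact ⟨h, rfl⟩
  | cons w γ ih =>
    rw [List.mem_cons, not_or] at hβ₁
    obtain ⟨hw, hγ⟩ := h
    obtain ⟨⟨-, hlegal⟩, hrun⟩ := ih hβ₁.2 (le_trans hv (active_le_topple I u hβ₁.1 st)) hγ
    have hswap := runArw_pair_comm I u hβ₁.1 hv hw
    refine ⟨⟨hv, le_trans hw (active_le_topple I u (Ne.symm hβ₁.1) st), ?_⟩, ?_⟩
    · change LegalSeq I (γ ++ β₂) (runArw I [v, w] (u, st)).1 (runArw I [v, w] (u, st)).2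
      rw [← hswap]
      exact hlegal
    · change runArw I (γ ++ β₂) (runArw I [v, w] (u, st)) = _
      rw [← hswap]
      exact hrun

end Runs

def StabilizesFrom (I : ℤ → ℕ → ArwInstr) (V : Set ℤ) (seq : List ℤ) (u : ℤ → ℕ)
    (st : ArwState) : Prop :=
  (∀ v ∈ seq, v ∈ V) ∧ LegalSeq I seq u st ∧ ∀ v ∈ V, (runArw I seq (u, st)).2.active v = 0

theorem StabilizesFrom.runArw_eq {I : ℤ → ℕ → ArwInstr} {V : Set ℤ} {α β : List ℤ}
    {u : ℤ → ℕ} {st : ArwState} (hα : StabilizesFrom I V α u st)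
    (hβ : StabilizesFrom I V β u st) :
    runArw I α (u, st) = runArw I β (u, st) := by
  induction α generalizing u st β with
  | nil =>
    obtain ⟨-, -, hstable⟩ := hα
    cases β with
    | nil => rfl
    | cons w β =>
      have hw : st.active w = 0 := hstable w (hβ.1 w List.mem_cons_self)
      exact absurd hβ.2.1.1 (by omega)
  | cons v α ih =>
    obtain ⟨hαV, ⟨hv, hαlegal⟩, hαstable⟩ := hα
    obtain ⟨hβV, hβlegal, hβstable⟩ := hβ
    have hvV : v ∈ V := hαV v List.mem_cons_self
    have hvβ : v ∈ β := by
      by_contra hvβ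
      have := (active_le_runArw I hvβ u st).trans_eq (hβstable v hvV)
      omega
    obtain ⟨β₁, β₂, rfl, hβ₁⟩ := List.eq_append_cons_of_mem hvβ
    obtain ⟨⟨-, hlegal⟩, hrun⟩ := hβlegal.move_front I hβ₁ β₂ hv
    have hβ' : StabilizesFrom I V (β₁ ++ β₂) _ _ :=
      ⟨fun x hx => hβV x (by simp only [List.mem_append, List.mem_cons] at hx ⊢; tauto),
        hlegal, by rwa [← hrun] at hβstable⟩
    exact (ih ⟨fun x hx => hαV x (List.mem_cons_of_mem v hx), hαlegal, hαstable⟩ hβ').trans hrun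

theorem ArwState.move_addParticles {v : ℤ} {st : ArwState} (hv : 1 ≤ st.active v)
    (t : ℤ) (τ : ℤ → ℕ) :
    (addParticles st τ).move v t = addParticles (st.move v t) τ := by
  ext x <;> simp only [move_active, move_asleep, addParticles, Function.update_apply] <;>
    split_ifs <;> grind

theorem ArwState.trySleep_addParticles {v : ℤ} {st : ArwState} (hv : 1 ≤ st.active v)
    (τ : ℤ → ℕ) :
    (addParticles st τ).trySleep v = addParticles (st.trySleep v) τ := by
  unfold trySleep
  split_ifs <;> ext x <;> simp only [addParticles, Function.update_apply] at * <;>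
    split_ifs at * <;> grind

theorem ArwInstr.act_addParticles (a : ArwInstr) {v : ℤ} {st : ArwState}
    (hv : 1 ≤ st.active v) (τ : ℤ → ℕ) :
    a.act v (addParticles st τ) = addParticles (a.act v st) τ := by
  cases a
  · exact ArwState.move_addParticles hv _ τ
  · exact ArwState.move_addParticles hv _ τ
  · exact ArwState.trySleep_addParticles hv τ

theorem initState_add (σ₁ σ₂ : ℤ → ℕ) :
    initState (fun v => σ₁ v + σ₂ v) = addParticles (initState σ₁) σ₂ := by
  ext v <;> simp [initState, addParticles]

section AddParticles

variable (I : ℤ → ℕ → ArwInstr) (τ : ℤ → ℕ)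

theorem runArw_addParticles {seq : List ℤ} {u : ℤ → ℕ} {st : ArwState}
    (h : LegalSeq I seq u st) :
    runArw I seq (u, addParticles st τ) =
      ((runArw I seq (u, st)).1, addParticles (runArw I seq (u, st)).2 τ) := by
  induction seq generalizing u st with
  | nil => rfl
  | cons v seq ih =>
    obtain ⟨hv, h⟩ := h
    simp only [runArw, topple_eq_act, ArwInstr.act_addParticles _ hv] at ih h ⊢
    exact ih h

theorem LegalSeq.addParticles {seq : List ℤ} {u : ℤ → ℕ} {st : ArwState}
    (h : LegalSeq I seq u st) : LegalSeq I seq u (addParticles st τ) := by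
  induction seq generalizing u st with
  | nil => trivial
  | cons v seq ih =>
    obtain ⟨hv, h⟩ := h
    refine ⟨hv.trans (by simp only [_root_.addParticles]; omega), ?_⟩
    rw [topple_eq_act, ArwInstr.act_addParticles _ hv, ← topple_eq_act]
    exact ih h

theorem runArw_append_addParticles {a : List ℤ} (b : List ℤ) {u : ℤ → ℕ} {st : ArwState}
    (h : LegalSeq I a u st) :
    runArw I (a ++ b) (u, addParticles st τ) =
      runArw I b ((runArw I a (u, st)).1, addParticles (runArw I a (u, st)).2 τ) := by
  rw [runArw_append, runArw_addParticles I τ h]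

theorem legalSeq_append_addParticles {a b : List ℤ} {u : ℤ → ℕ} {st : ArwState}
    (ha : LegalSeq I a u st)
    (hb : LegalSeq I b (runArw I a (u, st)).1 (addParticles (runArw I a (u, st)).2 τ)) :
    LegalSeq I (a ++ b) u (addParticles st τ) := by
  rw [legalSeq_append, runArw_addParticles I τ ha]
  exact ⟨ha.addParticles I τ, hb⟩

end AddParticles

theorem two_step_sink_additivity_general (n : ℕ) (I : ℤ → ℕ → ArwInstr) (σ₁ σ₂ : ℤ → ℕ)
    -- stage 1: stabilize `σ₁` on `{1,…,n}`
    (seqA : List ℤ) (hA : Stabilizes I σ₁ (Set.Icc (1 : ℤ) n) seqA)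
    -- stage 2: add `σ₂` to the resulting stable state and restabilize,
    -- continuing the instruction stacks from the stage-1 odometer
    (seqB : List ℤ) (hBin : ∀ v ∈ seqB, v ∈ Set.Icc (1 : ℤ) n)
    (hBlegal : LegalSeq I seqB (runArw I seqA (0, initState σ₁)).1
      (addParticles (runArw I seqA (0, initState σ₁)).2 σ₂))
    (hBstable : ∀ v ∈ Set.Icc (1 : ℤ) n,
      (runArw I seqB ((runArw I seqA (0, initState σ₁)).1,
        addParticles (runArw I seqA (0, initState σ₁)).2 σ₂)).2.active v = 0)
    -- one-shot: stabilize `σ₁ + σ₂` from scratch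
    (seqC : List ℤ) (hC : Stabilizes I (fun v => σ₁ v + σ₂ v) (Set.Icc (1 : ℤ) n) seqC) :
    sinkCount n (runArw I seqC (0, initState fun v => σ₁ v + σ₂ v)).2 =
      sinkCount n (runArw I seqB ((runArw I seqA (0, initState σ₁)).1,
        addParticles (runArw I seqA (0, initState σ₁)).2 σ₂)).2 := by
  obtain ⟨hAin, hAlegal, -⟩ := hA
  have hrun : runArw I (seqA ++ seqB) (0, initState fun v => σ₁ v + σ₂ v) =
      runArw I seqB ((runArw I seqA (0, initState σ₁)).1,
        addParticles (runArw I seqA (0, initState σ₁)).2 σ₂) := by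
    rw [initState_add, runArw_append_addParticles I σ₂ seqB hAlegal]
  have hAB : StabilizesFrom I (Set.Icc 1 n) (seqA ++ seqB) 0
      (initState fun v => σ₁ v + σ₂ v) := by
    refine ⟨fun v hv => (List.mem_append.1 hv).elim (hAin v) (hBin v), ?_, hrun ▸ hBstable⟩
    rw [initState_add]
    exact legalSeq_append_addParticles I σ₂ hAlegal hBlegal
  rw [StabilizesFrom.runArw_eq (I := I) hC hAB, hrun]

/-- two-step stabilization additivity of sink counts: fix instruction
stacks and particle locations. Stabilize the first batch `σ₁` on `{1,…,n}` via `seqA`,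
then add the second batch `σ₂` (waking any sleepers it meets) and restabilize via `seqB`
(continuing the same instruction stacks). The total number of particles absorbed at the
sinks `0` and `n+1` equals the number absorbed when stabilizing `σ₁ + σ₂` at once. -/
theorem two_step_sink_additivity (n : ℕ) (I : ℤ → ℕ → ArwInstr) (σ₁ σ₂ : ℤ → ℕ)
    (hσ₁ : ∀ v : ℤ, v ∉ Set.Icc (1 : ℤ) n → σ₁ v = 0)
    (hσ₂ : ∀ v : ℤ, v ∉ Set.Icc (1 : ℤ) n → σ₂ v = 0)
    -- stage 1: stabilize `σ₁` on `{1,…,n}`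
    (seqA : List ℤ) (hA : Stabilizes I σ₁ (Set.Icc (1 : ℤ) n) seqA)
    -- stage 2: add `σ₂` to the resulting stable state and restabilize,
    -- continuing the instruction stacks from the stage-1 odometer
    (seqB : List ℤ) (hBin : ∀ v ∈ seqB, v ∈ Set.Icc (1 : ℤ) n)
    (hBlegal : LegalSeq I seqB (runArw I seqA (0, initState σ₁)).1
      (addParticles (runArw I seqA (0, initState σ₁)).2 σ₂))
    (hBstable : ∀ v ∈ Set.Icc (1 : ℤ) n,
      (runArw I seqB ((runArw I seqA (0, initState σ₁)).1,
        addParticles (runArw I seqA (0, initState σ₁)).2 σ₂)).2.active v = 0)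
    -- one-shot: stabilize `σ₁ + σ₂` from scratch
    (seqC : List ℤ) (hC : Stabilizes I (fun v => σ₁ v + σ₂ v) (Set.Icc (1 : ℤ) n) seqC) :
    sinkCount n (runArw I seqC (0, initState fun v => σ₁ v + σ₂ v)).2 =
      sinkCount n (runArw I seqB ((runArw I seqA (0, initState σ₁)).1,
        addParticles (runArw I seqA (0, initState σ₁)).2 σ₂)).2 :=
  two_step_sink_additivity_general n I σ₁ σ₂ seqA hA seqB hBin hBlegal hBstable seqC hC
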